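/- If L > 1 and (1+k)^i / L > L for some i (i.e. i > 2·log L / log(1+k)), then the function ρ_i from the iterated stretching lemma is not the Jacobian (a.e., even up to a set of measure < ε_i) of any L-biLipschitz map f : [0,1]² → ℝ²; in particular, no L-biLipschitz map f : [0,1]² → ℝ² satisfies det(Df) = ρ_i almost everywhere. -/

import Mathlib

open MeasureTheory Set Metric

noncomputable section

abbrev E2 := EuclideanSpace ℝ (Fin 2)

def unitSq : Set E2 := {x : E2 | x 0 ∈ Icc (0:ℝ) 1 ∧ x 1 ∈ Icc (0:ℝ) 1}

def BiLipschitzOn (L : ℝ) (f : E2 → E2) (s : Set E2) : Prop :=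
  ∀ x ∈ s, ∀ y ∈ s, (1 / L) * dist x y ≤ dist (f x) (f y) ∧ dist (f x) (f y) ≤ L * dist x y

def Jac (f : E2 → E2) (s : Set E2) (x : E2) : ℝ := (fderivWithin ℝ f s x).det

theorem measurableSet_unitSq : MeasurableSet unitSq := by
  have hcoord (i : Fin 2) : Measurable fun x : E2 => x i :=
    (measurable_pi_apply i).comp (by fun_prop : Measurable fun x : E2 => x.ofLp)
  exact (hcoord 0 measurableSet_Icc).inter (hcoord 1 measurableSet_Icc)

theorem BiLipschitzOn.dist_lt_mul {L B : ℝ} {f : E2 → E2} {s : Set E2}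
    (hf : BiLipschitzOn L f s) {x y : E2} (hx : x ∈ s) (hy : y ∈ s) (hxy : x ≠ y)
    (hB : L < B) : dist (f x) (f y) < B * dist x y :=
  (hf x hx y hy).2.trans_lt <| mul_lt_mul_of_pos_right hB (dist_pos.mpr hxy)

theorem measure_sep_not_eq_zero_of_ae_restrict {α : Type*} [MeasurableSpace α]
    {μ : Measure α} {s : Set α} {p : α → Prop} (hs : MeasurableSet s)
    (h : ∀ᵐ x ∂μ.restrict s, p x) : μ {x ∈ s | ¬ p x} = 0 := by
  rw [ae_restrict_iff' hs, ae_iff] at h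
  simpa only [Classical.not_imp] using h

theorem stmt_16_general (L k : ℝ) (i : ℕ)
    (hgt : L < (1 + k) ^ i / L)
    (ρi : E2 → ℝ) (εi : ℝ) (n : ℕ) (l r : Fin n → E2) (hε : 0 < εi)
    (hseg : ∀ j, segment ℝ (l j) (r j) ⊆ unitSq)
    (hnd : ∀ j, l j ≠ r j)
    (hstretch : ∀ f : E2 → E2, BiLipschitzOn L f unitSq →
      volume {z ∈ unitSq | Jac f unitSq z ≠ ρi z} < ENNReal.ofReal εi →
      ∃ j, ((1 + k) ^ i / L) * dist (l j) (r j) ≤ dist (f (l j)) (f (r j))) :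
    (¬ ∃ f : E2 → E2, BiLipschitzOn L f unitSq ∧
        volume {z ∈ unitSq | Jac f unitSq z ≠ ρi z} < ENNReal.ofReal εi) ∧
    ¬ ∃ f : E2 → E2, BiLipschitzOn L f unitSq ∧
        ∀ᵐ x ∂(volume.restrict unitSq), Jac f unitSq x = ρi x := by
  have no_small_defect : ¬ ∃ f : E2 → E2, BiLipschitzOn L f unitSq ∧
      volume {z ∈ unitSq | Jac f unitSq z ≠ ρi z} < ENNReal.ofReal εi := by
    rintro ⟨f, hf, hvol⟩
    obtain ⟨j, hj⟩ := hstretch f hf hvol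
    exact hj.not_gt <| hf.dist_lt_mul (hseg j (left_mem_segment ℝ _ _))
      (hseg j (right_mem_segment ℝ _ _)) (hnd j) hgt
  refine ⟨no_small_defect, ?_⟩
  rintro ⟨f, hf, hae⟩
  refine no_small_defect ⟨f, hf, ?_⟩
  rw [measure_sep_not_eq_zero_of_ae_restrict measurableSet_unitSq hae]
  exact ENNReal.ofReal_pos.mpr hε

theorem stmt_16 (L c k : ℝ) (i : ℕ) (hL : 1 < L) (hc : 0 < c) (hc1 : c < 1) (hk : 0 < k)
    (hgt : L < (1 + k) ^ i / L)
    (ρi : E2 → ℝ) (εi : ℝ) (n : ℕ) (l r : Fin n → E2) (hε : 0 < εi)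
    (hseg : ∀ j, segment ℝ (l j) (r j) ⊆ unitSq)
    (hnd : ∀ j, l j ≠ r j)
    (hstretch : ∀ f : E2 → E2, BiLipschitzOn L f unitSq →
      volume {z ∈ unitSq | Jac f unitSq z ≠ ρi z} < ENNReal.ofReal εi →
      ∃ j, ((1 + k) ^ i / L) * dist (l j) (r j) ≤ dist (f (l j)) (f (r j))) :
    (¬ ∃ f : E2 → E2, BiLipschitzOn L f unitSq ∧
        volume {z ∈ unitSq | Jac f unitSq z ≠ ρi z} < ENNReal.ofReal εi) ∧
    ¬ ∃ f : E2 → E2, BiLipschitzOn L f unitSq ∧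
        ∀ᵐ x ∂(volume.restrict unitSq), Jac f unitSq x = ρi x :=
  stmt_16_general L k i hgt ρi εi n l r hε hseg hnd hstretch
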